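/- arXiv:1712.09742 — 6 statements merged into one kernel-verified Lean document; each statement's English description precedes it below -/
import Mathlib

section
/- (Grafting on 3-node trees.) Let $w_1, w_2 \in (-1,1)$ and define $\Sigma_1 = \begin{pmatrix}1 & w_1 & w_1 w_2\\ w_1 & 1 & w_2\\ w_1 w_2 & w_2 & 1\end{pmatrix}$, $\Sigma_2 = \begin{pmatrix}1 & w_1 & w_2\\ w_1 & 1 & w_1 w_2\\ w_2 & w_1 w_2 & 1\end{pmatrix}$. Then the eigenvalues of $\Sigma_1\Sigma_2^{-1}$ are $\{1, \lambda_{\max}, 1/\lambda_{\max}\}$ where $\lambda_{\max} = \frac{\sqrt{\beta}+w_2}{\sqrt{\beta}-w_2}$ and $\beta = w_2^2 + 2\frac{1-w_2^2}{1-w_1}$. -/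
/-!
Since `det S₂ = (1 - w₁²)(1 - w₂²) ≠ 0`, the characteristic polynomial of `S₁ S₂⁻¹` is
`det (X S₂ - S₁) / det S₂`, and expanding the pencil gives
`(X - 1) (X² - T X + 1)` with `T = 2 (1 - w₁ w₂²) / (1 - w₂²)`. The quadratic has the roots
`λ, λ⁻¹` as soon as `λ + λ⁻¹ = T`, and with `s = √β` this is
`2 (s² + w₂²) / (s² - w₂²) = T`, which is exactly what the definition of `β` says.
-/

open Matrix Polynomial

theorem Matrix.charpoly_mul_nonsing_inv_mul_C_det {n R : Type*} [Fintype n] [DecidableEq n]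
    [CommRing R] (A B : Matrix n n R) (hB : IsUnit B.det) :
    (A * B⁻¹).charpoly * C B.det = (scalar n (X : R[X]) * B.map C - A.map C).det := by
  rw [charpoly, ← RingHom.mapMatrix_apply, RingHom.map_det, ← det_mul, charmatrix, sub_mul,
    RingHom.mapMatrix_apply, RingHom.mapMatrix_apply, ← Matrix.map_mul, mul_assoc,
    nonsing_inv_mul B hB, mul_one]

theorem X_sub_C_mul_X_sub_C_inv {K : Type*} [Field K] {l : K} (hl : l ≠ 0) :
    (X - C l) * (X - C l⁻¹) = X ^ 2 - C (l + l⁻¹) * X + 1 := by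
  have : C l * C l⁻¹ = (1 : K[X]) := by rw [← C_mul, mul_inv_cancel₀ hl, C_1]
  rw [C_add]; linear_combination this

theorem det_chainCov {R : Type*} [CommRing R] (w1 w2 : R) :
    (!![1, w1, w2; w1, 1, w1 * w2; w2, w1 * w2, 1] : Matrix (Fin 3) (Fin 3) R).det
      = (1 - w1 ^ 2) * (1 - w2 ^ 2) := by
  rw [det_fin_three]
  simp only [Fin.isValue, of_apply, cons_val', cons_val_zero, cons_val_fin_one, cons_val_one,
    mul_one, cons_val, one_mul]
  ring

theorem det_chainCov_pencil {R : Type*} [CommRing R] (w1 w2 : R) :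
    (scalar (Fin 3) (X : R[X]) * (!![1, w1, w2; w1, 1, w1 * w2; w2, w1 * w2, 1]).map C
      - (!![1, w1, w1 * w2; w1, 1, w2; w1 * w2, w2, 1]).map C).det
      = C (1 - w1 ^ 2) * (X - 1) *
          (C (1 - w2 ^ 2) * X ^ 2 - 2 * C (1 - w1 * w2 ^ 2) * X + C (1 - w2 ^ 2)) := by
  rw [det_fin_three]
  simp only [scalar_apply, Fin.isValue, Matrix.sub_apply, diagonal_mul, map_apply, of_apply,
    cons_val', cons_val_zero, cons_val_fin_one, map_one, mul_one, cons_val_one, cons_val, map_mul,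
    X_mul_C, map_sub, map_pow]
  ring

theorem charpoly_chainCov_mul_inv {K : Type*} [Field K] {w1 w2 : K} (hw1 : 1 - w1 ^ 2 ≠ 0)
    (hw2 : 1 - w2 ^ 2 ≠ 0) :
    ((!![1, w1, w1 * w2; w1, 1, w2; w1 * w2, w2, 1] : Matrix (Fin 3) (Fin 3) K) *
        (!![1, w1, w2; w1, 1, w1 * w2; w2, w1 * w2, 1])⁻¹).charpoly
      = (X - C 1) * (X ^ 2 - C (2 * (1 - w1 * w2 ^ 2) / (1 - w2 ^ 2)) * X + 1) := by
  have hdet := det_chainCov w1 w2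
  have hd : (1 - w1 ^ 2) * (1 - w2 ^ 2) ≠ 0 := mul_ne_zero hw1 hw2
  refine mul_right_cancel₀ (C_ne_zero.mpr hd) ?_
  rw [← hdet, charpoly_mul_nonsing_inv_mul_C_det _ _ (hdet ▸ hd.isUnit), det_chainCov_pencil, hdet]
  have hcoef : C (2 * (1 - w1 * w2 ^ 2) / (1 - w2 ^ 2)) * C (1 - w2 ^ 2)
      = 2 * C (1 - w1 * w2 ^ 2) := by
    rw [← C_mul, div_mul_cancel₀ _ hw2, C_mul, C_ofNat]
  rw [C_mul, C_1]
  linear_combination (X - 1) * X * C (1 - w1 ^ 2) * hcoef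

theorem ratio_add_inv_eq_of_sq_eq {w1 w2 s : ℝ} (hw1 : w1 ≠ 1) (hw2 : w2 ^ 2 ≠ 1)
    (hsub : s - w2 ≠ 0) (hadd : s + w2 ≠ 0) (hs : s ^ 2 = w2 ^ 2 + 2 * (1 - w2 ^ 2) / (1 - w1)) :
    (s + w2) / (s - w2) + ((s + w2) / (s - w2))⁻¹ = 2 * (1 - w1 * w2 ^ 2) / (1 - w2 ^ 2) := by
  have hs' : s ^ 2 * (1 - w1) = w2 ^ 2 * (1 - w1) + 2 * (1 - w2 ^ 2) := by
    rw [hs, add_mul, div_mul_cancel₀ _ (sub_ne_zero.mpr hw1.symm)]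
  rw [inv_div, div_add_div _ _ hsub hadd,
    div_eq_div_iff (mul_ne_zero hsub hadd) (sub_ne_zero.mpr hw2.symm)]
  linear_combination (-2 * w2 ^ 2) * hs'

theorem stmt11_general (w1 w2 : ℝ) (hw1 : w1 ∈ Set.Ioo (-1 : ℝ) 1)
    (hw2 : w2 ∈ Set.Ioo (-1 : ℝ) 1) :
    let β : ℝ := w2 ^ 2 + 2 * (1 - w2 ^ 2) / (1 - w1)
    let lmax : ℝ := (Real.sqrt β + w2) / (Real.sqrt β - w2)
    let S1 : Matrix (Fin 3) (Fin 3) ℝ :=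
      !![1, w1, w1 * w2; w1, 1, w2; w1 * w2, w2, 1]
    let S2 : Matrix (Fin 3) (Fin 3) ℝ :=
      !![1, w1, w2; w1, 1, w1 * w2; w2, w1 * w2, 1]
    (S1 * S2⁻¹).charpoly = (X - C 1) * (X - C lmax) * (X - C lmax⁻¹) := by
  intro β lmax S1 S2
  obtain ⟨hw1l, hw1r⟩ := hw1
  have hw2sq : w2 ^ 2 < 1 := by nlinarith [hw2.1, hw2.2]
  have hβ : w2 ^ 2 < β := lt_add_of_pos_right _ (div_pos (by linarith) (by linarith))
  have hs : Real.sqrt β ^ 2 = β := Real.sq_sqrt (by positivity)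
  have hsw : |w2| < Real.sqrt β := Real.lt_sqrt_of_sq_lt (by rwa [sq_abs])
  have hsub : Real.sqrt β - w2 ≠ 0 := by linarith [le_abs_self w2]
  have hadd : Real.sqrt β + w2 ≠ 0 := by linarith [neg_abs_le w2]
  rw [mul_assoc, X_sub_C_mul_X_sub_C_inv (div_ne_zero hadd hsub),
    ratio_add_inv_eq_of_sq_eq hw1r.ne hw2sq.ne hsub hadd hs]
  exact charpoly_chainCov_mul_inv (by nlinarith) (by linarith)

theorem stmt11 (w1 w2 : ℝ) (hw1 : w1 ∈ Set.Ioo (-1 : ℝ) 1)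
    (hw2 : w2 ∈ Set.Ioo (-1 : ℝ) 1) (hw2ne : w2 ≠ 0) :
    let β : ℝ := w2 ^ 2 + 2 * (1 - w2 ^ 2) / (1 - w1)
    let lmax : ℝ := (Real.sqrt β + w2) / (Real.sqrt β - w2)
    let S1 : Matrix (Fin 3) (Fin 3) ℝ :=
      !![1, w1, w1 * w2; w1, 1, w2; w1 * w2, w2, 1]
    let S2 : Matrix (Fin 3) (Fin 3) ℝ :=
      !![1, w1, w2; w1, 1, w1 * w2; w2, w1 * w2, 1]
    (S1 * S2⁻¹).charpoly = (X - C 1) * (X - C lmax) * (X - C lmax⁻¹) :=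
  stmt11_general w1 w2 hw1 hw2
end

section
/- With $\Sigma_1, \Sigma_2$ as in the 3-node grafting pair (edge weights $w_1, w_2 \in (-1,1)$), the Chernoff information $CI(\Sigma_1\|\Sigma_2) = \ln(\sqrt{\lambda_{\max}} + 1/\sqrt{\lambda_{\max}}) - \ln 2$ admits the closed form $CI(\Sigma_1\|\Sigma_2) = \frac{1}{2}\ln\Big(1 + \frac{1}{2}\,\frac{w_2^2}{1-w_2^2}(1-w_1)\Big)$. -/
theorem stmt12 (w1 w2 : ℝ) (hw1 : w1 ∈ Set.Ioo (-1 : ℝ) 1)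
    (hw2 : w2 ∈ Set.Ioo (-1 : ℝ) 1) (hw2ne : w2 ≠ 0) :
    let β : ℝ := w2 ^ 2 + 2 * (1 - w2 ^ 2) / (1 - w1)
    let lmax : ℝ := (Real.sqrt β + w2) / (Real.sqrt β - w2)
    Real.log (Real.sqrt lmax + 1 / Real.sqrt lmax) - Real.log 2 =
      (1/2) * Real.log (1 + (1/2) * (w2 ^ 2 / (1 - w2 ^ 2)) * (1 - w1)) := by
  intro β lmax
  obtain ⟨hw1l, hw1r⟩ := hw1
  obtain ⟨hw2l, hw2r⟩ := hw2
  have h1w1 : (0:ℝ) < 1 - w1 := by linarith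
  have h1w2 : (0:ℝ) < 1 - w2 ^ 2 := by nlinarith
  have hβgt : w2 ^ 2 < β := by
    have : 0 < 2 * (1 - w2 ^ 2) / (1 - w1) := by positivity
    simp only [β]; linarith
  have hβ0 : 0 ≤ β := by nlinarith [sq_nonneg w2]
  set b := Real.sqrt β with hb
  have hb2 : b ^ 2 = β := Real.sq_sqrt hβ0
  have hbabs : |w2| < b := by
    have hb0 : 0 ≤ b := Real.sqrt_nonneg _
    nlinarith [abs_nonneg w2, sq_abs w2]
  have hbm : 0 < b - w2 := by
    have := neg_abs_le w2; have := le_abs_self w2; linarith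
  have hbp : 0 < b + w2 := by
    have := neg_abs_le w2; have := le_abs_self w2; linarith
  have hlmax : 0 < lmax := div_pos hbp hbm
  set s := Real.sqrt lmax with hs
  have hs0 : 0 < s := Real.sqrt_pos.mpr hlmax
  have hs2 : s ^ 2 = lmax := Real.sq_sqrt hlmax.le
  set A : ℝ := 1 + (1/2) * (w2 ^ 2 / (1 - w2 ^ 2)) * (1 - w1) with hA
  have hA0 : 0 < A := by positivity
  have hsq : (s + 1/s) ^ 2 = 4 * A := by
    have hβdef : b ^ 2 = w2 ^ 2 + 2 * (1 - w2 ^ 2) / (1 - w1) := by rw [hb2]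
    have hlm : lmax = (b + w2) / (b - w2) := rfl
    have hβ' : b ^ 2 * (1 - w1) = w2 ^ 2 * (1 - w1) + 2 * (1 - w2 ^ 2) := by
      rw [hβdef]; field_simp
    have h1 : (s + 1/s) ^ 2 = lmax + 2 + 1/lmax := by
      rw [← hs2]; field_simp; ring
    rw [h1, hlm, hA]
    field_simp
    linear_combination (-4 * w2 ^ 2) * hβ'
  have hkey : s + 1/s = 2 * Real.sqrt A := by
    have h4 : Real.sqrt (4 * A) = 2 * Real.sqrt A := by
      rw [show (4:ℝ) = 2 ^ 2 by norm_num, Real.sqrt_mul (by positivity),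
        Real.sqrt_sq (by norm_num)]
    have := Real.sqrt_sq (by positivity : (0:ℝ) ≤ s + 1/s)
    rw [← this, hsq, h4]
  rw [hkey, Real.log_mul (by norm_num) (by positivity), Real.log_sqrt hA0.le]
  ring
end

section
/- Let $\Sigma$ be the normalized covariance matrix of a Gaussian tree $G = (V,E,W)$ on $N$ nodes, where $\sigma_{ii}=1$, $\sigma_{ij} = \prod_{e \in \mathrm{path}(i,j)} w_e$, and all $|w_e| < 1$. Then $\det\Sigma = \prod_{e_{ij}\in E}(1 - w_{ij}^2)$. -/
/-!
Peel off a leaf `v` of the tree, with unique neighbour `u`. Every path from `v` to a vertex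
`j ≠ v` starts with the edge `vu`, so off the diagonal row `v` of `Σ` is `w_vu` times row `u`.
Subtracting `w_vu` times row `u` from row `v` leaves the row `(1 - w_vu²) e_v`, hence
`det Σ = (1 - w_vu²) det Σ'`, where `Σ'` is the path-product matrix of the tree with `v` removed.
-/

open Matrix

namespace Matrix

variable {n R : Type*} [Fintype n] [DecidableEq n] [CommRing R]

theorem det_updateRow_single_self (A : Matrix n n R) (i : n) :
    (A.updateRow i (Pi.single i 1)).det = (A.submatrix ((↑) : ({i}ᶜ : Set n) → n) (↑)).det := by
  set B := (A.updateRow i (Pi.single i 1)).submatrix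
    (Equiv.Set.sumCompl {i}) (Equiv.Set.sumCompl {i})
  have hB₁₂ : B.toBlocks₁₂ = 0 := by
    ext ⟨k, rfl⟩ ⟨j, hj⟩
    simp [B, toBlocks₁₂, Pi.single_eq_of_ne (Set.mem_compl_singleton_iff.mp hj)]
  have hB₁₁ : B.toBlocks₁₁.det = 1 := by
    rw [det_unique]
    simp [B, toBlocks₁₁]
  have hB₂₂ : B.toBlocks₂₂ = A.submatrix (↑) (↑) := by
    ext ⟨k, hk⟩ ⟨j, _⟩
    simp [B, toBlocks₂₂, updateRow_ne (Set.mem_compl_singleton_iff.mp hk)]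
  rw [← det_submatrix_equiv_self (Equiv.Set.sumCompl {i})]
  change B.det = _
  rw [← fromBlocks_toBlocks B, hB₁₂, det_fromBlocks_zero₁₂, hB₁₁, hB₂₂, one_mul]

theorem det_eq_mul_det_submatrix_compl_of_row_eq (A : Matrix n n R) {i k : n} (hik : i ≠ k)
    (c : R) (hrow : ∀ j ≠ i, A i j = c * A k j) :
    A.det = (A i i - c * A k i) * (A.submatrix ((↑) : ({i}ᶜ : Set n) → n) (↑)).det := by
  have hreduced : A i + (-c) • A k = (A i i - c * A k i) • Pi.single i 1 := by
    ext j
    rcases eq_or_ne j i with rfl | hj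
    · simp [sub_eq_add_neg]
    · simp [hrow j hj, Pi.single_eq_of_ne hj]
  rw [← det_updateRow_add_smul_self A hik (-c), hreduced, det_updateRow_smul,
    det_updateRow_single_self]

end Matrix

namespace SimpleGraph

section Finite

variable {V : Type*} [Fintype V] {G : SimpleGraph V} [DecidableRel G.Adj]

theorem prod_edgeFinset_eq_prod_incidenceFinset_mul_prod_induce [DecidableEq V]
    {M : Type*} [CommMonoid M] (v : V) (f : Sym2 V → M) :
    ∏ e ∈ G.edgeFinset, f e =
      (∏ e ∈ G.incidenceFinset v, f e) * ∏ e ∈ (G.induce {v}ᶜ).edgeFinset, f (e.map (↑)) := by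
  have hinduce : (G.induce {v}ᶜ).edgeFinset.map
      (Function.Embedding.subtype (· ∈ ({v}ᶜ : Set V))).sym2Map = G.edgeFinset.filter (v ∉ ·) := by
    rw [map_edgeFinset_induce]
    ext e
    simp only [Finset.mem_inter, Finset.mem_sym2_iff, Set.mem_toFinset,
      Set.mem_compl_singleton_iff, Finset.mem_filter]
    exact and_congr_right fun _ => ⟨fun h hv => h v hv rfl, by rintro h a ha rfl; exact h ha⟩
  rw [incidenceFinset_eq_filter, ← Finset.prod_filter_mul_prod_filter_not G.edgeFinset (v ∈ ·),
    ← hinduce, Finset.prod_map]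
  rfl

theorem incidenceFinset_eq_singleton_of_degree_eq_one [DecidableEq V] {v u : V}
    (hv : G.degree v = 1) (hvu : G.Adj v u) : G.incidenceFinset v = {s(v, u)} := by
  obtain ⟨e, he⟩ := Finset.card_eq_one.mp ((G.card_incidenceFinset_eq_degree v).trans hv)
  have hvu_mem : s(v, u) ∈ G.incidenceFinset v := by
    simpa [mem_incidenceFinset] using G.mk'_mem_incidenceSet_left_iff.mpr hvu
  rw [he, Finset.mem_singleton] at hvu_mem
  rw [he, hvu_mem]

theorem IsTree.induce_compl_singleton_of_degree_eq_one (hT : G.IsTree) {v : V}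
    (hv : G.degree v = 1) : (G.induce {v}ᶜ).IsTree :=
  ⟨hT.connected.induce_compl_singleton_of_degree_eq_one hv, hT.isAcyclic.induce _⟩

end Finite

variable {V : Type*} {G : SimpleGraph V} {R : Type*} [CommRing R]

def IsPathProductMatrix (G : SimpleGraph V) (w : Sym2 V → R) (S : Matrix V V R) : Prop :=
  ∀ i j (p : G.Walk i j), p.IsPath → S i j = (p.edges.map w).prod

namespace IsPathProductMatrix

variable {w : Sym2 V → R} {S : Matrix V V R}

theorem apply_self (hS : G.IsPathProductMatrix w S) (i : V) : S i i = 1 := by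
  simpa using hS i i .nil .nil

theorem apply_of_adj (hS : G.IsPathProductMatrix w S) {i j : V} (h : G.Adj i j) :
    S i j = w s(i, j) := by
  simpa using hS i j (.cons h .nil) (Walk.IsPath.nil.cons (by simpa using h.ne))

theorem comap {W : Type*} {H : SimpleGraph W} (f : H ↪g G) (hS : G.IsPathProductMatrix w S) :
    H.IsPathProductMatrix (w ∘ Sym2.map f) (S.submatrix f f) := fun i j p hp => by
  simpa [Walk.edges_map, List.map_map] using hS (f i) (f j) (p.map f.toHom) (hp.map f.injective)

theorem apply_eq_mul_of_degree_eq_one [Fintype V] [DecidableRel G.Adj]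
    (hS : G.IsPathProductMatrix w S) (hG : G.Connected) {v u : V} (hv : G.degree v = 1)
    (hvu : G.Adj v u) (j : V) (hj : j ≠ v) : S v j = w s(v, u) * S u j := by
  obtain ⟨p, hp⟩ := (hG.induce_compl_singleton_of_degree_eq_one hv).exists_isPath
    ⟨u, hvu.ne.symm⟩ ⟨j, hj⟩
  let q : G.Walk u j := p.map (Embedding.induce {v}ᶜ).toHom
  have hq : q.IsPath := hp.map (Embedding.induce (G := G) _).injective
  have hvq : v ∉ q.support := by
    intro hvq
    obtain ⟨x, -, hx⟩ := List.mem_map.mp ((Walk.support_map _ p).symm ▸ hvq)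
    exact x.2 hx
  rw [hS v j (q.cons hvu) (hq.cons hvq), hS u j q hq, Walk.edges_cons, List.map_cons,
    List.prod_cons]

theorem det_eq_mul_det_submatrix_compl_of_degree_eq_one [Fintype V] [DecidableEq V]
    [DecidableRel G.Adj] (hS : G.IsPathProductMatrix w S) (hG : G.Connected) {v u : V}
    (hv : G.degree v = 1) (hvu : G.Adj v u) :
    S.det = (1 - w s(v, u) ^ 2) * (S.submatrix ((↑) : ({v}ᶜ : Set V) → V) (↑)).det := by
  rw [S.det_eq_mul_det_submatrix_compl_of_row_eq hvu.ne (w s(v, u))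
    (hS.apply_eq_mul_of_degree_eq_one hG hv hvu), hS.apply_self, hS.apply_of_adj hvu.symm,
    Sym2.eq_swap, sq]

end IsPathProductMatrix

theorem IsTree.det_eq_prod_of_isPathProductMatrix [Fintype V] [DecidableEq V]
    [DecidableRel G.Adj] {w : Sym2 V → R} {S : Matrix V V R} (hT : G.IsTree)
    (hS : G.IsPathProductMatrix w S) : S.det = ∏ e ∈ G.edgeFinset, (1 - w e ^ 2) := by
  refine Fintype.induction_subsingleton_or_nontrivial (P := fun V _ => ∀ [DecidableEq V]
    (G : SimpleGraph V) [DecidableRel G.Adj] (w : Sym2 V → R) (S : Matrix V V R),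
    G.IsTree → G.IsPathProductMatrix w S → S.det = ∏ e ∈ G.edgeFinset, (1 - w e ^ 2))
    V ?_ ?_ G w S hT hS
  · intro V _ _ _ G _ w S _ hS
    have hS_one : S = 1 := by
      ext i j
      rw [Subsingleton.elim i j, hS.apply_self, one_apply_eq]
    have hE : G.edgeFinset = ∅ := Finset.eq_empty_of_forall_notMem <| Sym2.ind fun a b hab =>
      G.ne_of_adj (G.mem_edgeSet.mp (G.mem_edgeFinset.mp hab)) (Subsingleton.elim a b)
    rw [hS_one, det_one, hE, Finset.prod_empty]
  · intro V _ _ ih _ G _ w S hT hS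
    obtain ⟨v, hv⟩ := hT.exists_vert_degree_one_of_nontrivial
    obtain ⟨u, hvu, -⟩ := degree_eq_one_iff_existsUnique_adj.mp hv
    rw [hS.det_eq_mul_det_submatrix_compl_of_degree_eq_one hT.connected hv hvu,
      prod_edgeFinset_eq_prod_incidenceFinset_mul_prod_induce v,
      incidenceFinset_eq_singleton_of_degree_eq_one hv hvu, Finset.prod_singleton]
    congr 1
    exact ih _ (Fintype.card_subtype_lt (p := (· ∈ ({v}ᶜ : Set V))) (x := v) (by simp)) _ _ _
      (hT.induce_compl_singleton_of_degree_eq_one hv) (hS.comap (Embedding.induce _))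

end SimpleGraph

theorem stmt13_general {N : ℕ} (G : SimpleGraph (Fin N)) [DecidableRel G.Adj]
    (hT : G.IsTree) (w : Sym2 (Fin N) → ℝ)
    (S : Matrix (Fin N) (Fin N) ℝ)
    (hS : ∀ i j : Fin N, ∀ p : G.Walk i j, p.IsPath → S i j = (p.edges.map w).prod) :
    S.det = ∏ e ∈ G.edgeFinset, (1 - (w e) ^ 2) :=
  hT.det_eq_prod_of_isPathProductMatrix hS

theorem stmt13 {N : ℕ} (G : SimpleGraph (Fin N)) [DecidableRel G.Adj]
    (hT : G.IsTree) (w : Sym2 (Fin N) → ℝ)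
    (hw : ∀ e ∈ G.edgeFinset, |w e| < 1)
    (S : Matrix (Fin N) (Fin N) ℝ)
    (hS : ∀ i j : Fin N, ∀ p : G.Walk i j, p.IsPath → S i j = (p.edges.map w).prod) :
    S.det = ∏ e ∈ G.edgeFinset, (1 - (w e) ^ 2) :=
  stmt13_general G hT w S hS
end

section
/- Let $\Sigma = [\sigma_{ij}]$ be the normalized covariance matrix of a Gaussian tree $G=(V,E,W)$ with $|w_e|<1$ for all edges. Then $\Sigma$ is invertible and the entries $u_{ij}$ of $\Sigma^{-1}$ satisfy: $u_{ij} = -w_{ij}/(1-w_{ij}^2)$ if $e_{ij}\in E$; $u_{ij}=0$ if $i\neq j$ and $e_{ij}\notin E$; and $u_{ii} = 1 + \sum_{p: e_{ip}\in E} w_{ip}^2/(1-w_{ip}^2)$. -/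
open Matrix

/-!
Let `U` be the matrix with diagonal entries `1 + ∑ w e ^ 2 / (1 - w e ^ 2)` over the edges at the
vertex, `-w e / (1 - w e ^ 2)` on the edges and `0` elsewhere; we check `U * Σ = 1`.
Row `j` of `U` only sees `j` and its neighbours. For `i ≠ j`, let `k₀` be the neighbour of `j` on
the path from `j` to `i`; by acyclicity every other neighbour `k` of `j` can be put in front of that
path, so `σ_ki = w_kj σ_ji`, while `σ_ji = w_jk₀ σ_k₀i`, and these contributions to `(U * Σ)_ji`
cancel.
-/

namespace SimpleGraph

variable {V : Type*} {G : SimpleGraph V}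

theorem IsAcyclic.isPath_cons_cons (hG : G.IsAcyclic) {i j k k₀ : V} (hkj : G.Adj k j)
    (hjk₀ : G.Adj j k₀) {q : G.Walk k₀ i} (hq : (Walk.cons hjk₀ q).IsPath) (hk : k ≠ k₀) :
    (Walk.cons hkj (Walk.cons hjk₀ q)).IsPath := by
  classical
  refine (Walk.cons_isPath_iff _ _).2 ⟨hq, ?_⟩
  have hj : j ∉ q.support := ((Walk.cons_isPath_iff _ _).1 hq).2
  rw [Walk.support_cons, List.mem_cons, not_or]
  refine ⟨hkj.ne, fun hkq => ?_⟩
  -- `s(j, k)` is a bridge, so it lies on the walk from `j` to `k` through `k₀`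
  have hbridge := isBridge_iff_forall_walk_mem_edges.1
    (isAcyclic_iff_forall_adj_isBridge.1 hG hkj.symm) (Walk.cons hjk₀ (q.takeUntil k hkq))
  rw [Walk.edges_cons, List.mem_cons] at hbridge
  rcases hbridge with h | h
  · exact hk (Sym2.congr_right.1 h)
  · exact hj (q.fst_mem_support_of_mem_edges (q.edges_takeUntil_subset_edges hkq h))

variable {M : Type*} [Monoid M]

def IsPathProduct (G : SimpleGraph V) (w : Sym2 V → M) (S : Matrix V V M) : Prop :=
  ∀ i j (p : G.Walk i j), p.IsPath → S i j = (p.edges.map w).prod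

namespace IsPathProduct

variable {w : Sym2 V → M} {S : Matrix V V M}

theorem apply_self (hS : G.IsPathProduct w S) (i : V) : S i i = 1 := by
  simpa using hS i i .nil .nil

theorem apply_cons (hS : G.IsPathProduct w S) {i j k : V} {h : G.Adj i j} {p : G.Walk j k}
    (hp : (Walk.cons h p).IsPath) : S i k = w s(i, j) * S j k := by
  rw [hS _ _ _ hp, hS _ _ _ hp.of_cons, Walk.edges_cons, List.map_cons, List.prod_cons]

theorem apply_of_adj (hS : G.IsPathProduct w S) {i j : V} (h : G.Adj i j) : S i j = w s(i, j) := by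
  rw [hS.apply_cons ((Walk.cons_isPath_iff h .nil).2 ⟨.nil, by simpa using h.ne⟩), hS.apply_self,
    mul_one]

end IsPathProduct

section Precision

variable [Fintype V] [DecidableEq V] [DecidableRel G.Adj]

theorem mul_apply_eq_add_sum_neighborFinset {R ι : Type*} [NonUnitalNonAssocSemiring R]
    {A : Matrix V V R} (hA : ∀ j k, j ≠ k → ¬G.Adj j k → A j k = 0) (B : Matrix V ι R) (j : V)
    (i : ι) : (A * B) j i = A j j * B j i + ∑ k ∈ G.neighborFinset j, A j k * B k i := by
  rw [mul_apply, ← Finset.sum_subset (Finset.subset_univ (insert j (G.neighborFinset j))),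
    Finset.sum_insert (by simp)]
  intro k _ hk
  simp only [Finset.mem_insert, mem_neighborFinset, not_or] at hk
  rw [hA j k (Ne.symm hk.1) hk.2, zero_mul]

variable {K : Type*} [Field K] (G) (w : Sym2 V → K)

def treePrecision : Matrix V V K := fun a b =>
  if a = b then 1 + ∑ p ∈ G.neighborFinset a, w s(a, p) ^ 2 / (1 - w s(a, p) ^ 2)
  else if G.Adj a b then -w s(a, b) / (1 - w s(a, b) ^ 2) else 0

variable {G}

theorem treePrecision_apply_self (a : V) :
    G.treePrecision w a a = 1 + ∑ p ∈ G.neighborFinset a, w s(a, p) ^ 2 / (1 - w s(a, p) ^ 2) :=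
  if_pos rfl

theorem treePrecision_apply_of_adj {a b : V} (h : G.Adj a b) :
    G.treePrecision w a b = -w s(a, b) / (1 - w s(a, b) ^ 2) := by
  simp [treePrecision, h, h.ne]

theorem treePrecision_apply_of_not_adj {a b : V} (hab : a ≠ b) (h : ¬G.Adj a b) :
    G.treePrecision w a b = 0 := by
  simp [treePrecision, h, hab]

variable {w} {S : Matrix V V K}

theorem treePrecision_mul_apply_eq (hS : G.IsPathProduct w S) (j : V) :
    (G.treePrecision w * S) j j = 1 := by
  have hterm : ∀ k ∈ G.neighborFinset j,
      G.treePrecision w j k * S k j = -(w s(j, k) ^ 2 / (1 - w s(j, k) ^ 2)) := by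
    intro k hk
    rw [mem_neighborFinset] at hk
    rw [treePrecision_apply_of_adj w hk, hS.apply_of_adj hk.symm, Sym2.eq_swap]
    ring
  rw [mul_apply_eq_add_sum_neighborFinset (fun _ _ => treePrecision_apply_of_not_adj w),
    Finset.sum_congr rfl hterm, treePrecision_apply_self, hS.apply_self, Finset.sum_neg_distrib]
  ring

theorem treePrecision_mul_apply_of_ne (hG : G.IsTree)
    (hw : ∀ ⦃a b⦄, G.Adj a b → w s(a, b) ^ 2 ≠ 1) (hS : G.IsPathProduct w S) {i j : V}
    (hji : j ≠ i) :
    (G.treePrecision w * S) j i = 0 := by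
  obtain ⟨r, hr, -⟩ := hG.existsUnique_path j i
  cases r with
  | nil => exact absurd rfl hji
  | @cons _ k₀ _ hjk₀ q =>
  have hk₀ : k₀ ∈ G.neighborFinset j := (mem_neighborFinset _ _ _).2 hjk₀
  have hterm : ∀ k ∈ (G.neighborFinset j).erase k₀,
      G.treePrecision w j k * S k i = -(w s(j, k) ^ 2 / (1 - w s(j, k) ^ 2)) * S j i := by
    intro k hk
    obtain ⟨hkk₀, hk⟩ := Finset.mem_erase.1 hk
    rw [mem_neighborFinset] at hk
    rw [treePrecision_apply_of_adj w hk,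
      hS.apply_cons (hG.isAcyclic.isPath_cons_cons hk.symm hjk₀ hr hkk₀), Sym2.eq_swap]
    ring
  have hd : 1 - w s(j, k₀) ^ 2 ≠ 0 := sub_ne_zero.2 (hw hjk₀).symm
  rw [mul_apply_eq_add_sum_neighborFinset (fun _ _ => treePrecision_apply_of_not_adj w),
    ← Finset.add_sum_erase _ _ hk₀, Finset.sum_congr rfl hterm, treePrecision_apply_self,
    ← Finset.add_sum_erase _ _ hk₀, treePrecision_apply_of_adj w hjk₀, hS.apply_cons hr,
    ← Finset.sum_mul, Finset.sum_neg_distrib]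
  field_simp
  ring

theorem treePrecision_mul_eq_one (hG : G.IsTree) (hw : ∀ ⦃a b⦄, G.Adj a b → w s(a, b) ^ 2 ≠ 1)
    (hS : G.IsPathProduct w S) : G.treePrecision w * S = 1 := by
  ext j i
  rcases eq_or_ne j i with rfl | hji
  · rw [treePrecision_mul_apply_eq hS, one_apply_eq]
  · rw [treePrecision_mul_apply_of_ne hG hw hS hji, one_apply_ne hji]

end Precision

end SimpleGraph

theorem stmt14 {N : ℕ} (G : SimpleGraph (Fin N)) [DecidableRel G.Adj]
    (hT : G.IsTree) (w : Sym2 (Fin N) → ℝ)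
    (hw : ∀ e ∈ G.edgeFinset, |w e| < 1)
    (S : Matrix (Fin N) (Fin N) ℝ)
    (hS : ∀ i j : Fin N, ∀ p : G.Walk i j, p.IsPath → S i j = (p.edges.map w).prod) :
    IsUnit S.det ∧
    (∀ i j : Fin N, G.Adj i j → S⁻¹ i j = -(w s(i, j)) / (1 - (w s(i, j)) ^ 2)) ∧
    (∀ i j : Fin N, i ≠ j → ¬ G.Adj i j → S⁻¹ i j = 0) ∧
    (∀ i : Fin N, S⁻¹ i i = 1 + ∑ p ∈ G.neighborFinset i, (w s(i, p)) ^ 2 / (1 - (w s(i, p)) ^ 2)) := by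
  have hw' : ∀ ⦃a b⦄, G.Adj a b → w s(a, b) ^ 2 ≠ 1 := fun _ _ h =>
    (sq_lt_one_iff_abs_lt_one _).2 (hw _ (G.mem_edgeFinset.2 h)) |>.ne
  have hU : G.treePrecision w * S = 1 :=
    SimpleGraph.treePrecision_mul_eq_one hT hw' hS
  rw [inv_eq_left_inv hU]
  exact ⟨isUnit_det_of_left_inverse hU, fun _ _ => SimpleGraph.treePrecision_apply_of_adj w,
    fun _ _ => SimpleGraph.treePrecision_apply_of_not_adj w,
    SimpleGraph.treePrecision_apply_self w⟩
end

section
/- (Adding a leaf preserves generalized eigenvalues up to an extra eigenvalue 1.) Let $\Sigma_1, \Sigma_2$ be $N\times N$ symmetric positive definite matrices, both with $(N,N)$ diagonal entry 1, and let $w \in (-1,1)$. Define $(N+1)\times(N+1)$ matrices $\Sigma_1' = \begin{pmatrix}\Sigma_1 & w\,\Sigma_1 e_N\\ w\,e_N^T\Sigma_1 & 1\end{pmatrix}$ and $\Sigma_2' = \begin{pmatrix}\Sigma_2 & w\,\Sigma_2 e_N\\ w\,e_N^T\Sigma_2 & 1\end{pmatrix}$, where $e_N$ is the $N$-th standard basis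 vector. Then the characteristic polynomial of $\Sigma_1'\Sigma_2'^{-1}$ equals $(\lambda - 1)$ times the characteristic polynomial of $\Sigma_1\Sigma_2^{-1}$. -/
open Matrix Polynomial

lemma charpoly_conj_aux {n : Type*} [Fintype n] [DecidableEq n] {R : Type*} [CommRing R]
    (P A : Matrix n n R) (h : IsUnit P.det) :
    (P * A * P⁻¹).charpoly = A.charpoly := by
  have hP : P * P⁻¹ = 1 := mul_nonsing_inv P h
  have key : charmatrix (P * A * P⁻¹) =
      P.map (C : R →+* R[X]) * charmatrix A * (P⁻¹).map (C : R →+* R[X]) := by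
    have hc : Commute (Matrix.scalar n (X : R[X])) (P.map (C : R →+* R[X])) :=
      scalar_commute _ (Commute.all _) _
    have hmap : P.map (C : R →+* R[X]) * (P⁻¹).map (C : R →+* R[X]) = 1 := by
      rw [← Matrix.map_mul, hP]; simp
    simp only [charmatrix, RingHom.mapMatrix_apply]
    rw [Matrix.mul_sub, Matrix.sub_mul, ← hc.eq, Matrix.mul_assoc (Matrix.scalar n X), hmap,
      Matrix.mul_one]
    congr 1
    simp [Matrix.map_mul]
  have hdet : (P.map (C : R →+* R[X])).det * ((P⁻¹).map (C : R →+* R[X])).det = 1 := by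
    rw [← det_mul, ← Matrix.map_mul, hP]; simp
  rw [Matrix.charpoly, Matrix.charpoly, key, det_mul, det_mul]
  rw [mul_comm ((P.map (C : R →+* R[X])).det) _, mul_assoc, hdet, mul_one]

lemma leaf_factor {N : ℕ} (S : Matrix (Fin N) (Fin N) ℝ) (iN : Fin N) (hd : S iN iN = 1) (w : ℝ) :
    Matrix.fromBlocks S (Matrix.of fun i _ => w * S i iN) (Matrix.of fun _ j => w * S iN j) 1
      = (Matrix.fromBlocks 1 0 (Matrix.of fun (_ : Unit) j => if j = iN then w else 0) 1
          : Matrix (Fin N ⊕ Unit) (Fin N ⊕ Unit) ℝ)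
        * (Matrix.fromBlocks S 0 0 (Matrix.of fun (_ : Unit) (_ : Unit) => (1 - w^2)))
        * (Matrix.fromBlocks 1 (Matrix.of fun i (_ : Unit) => if i = iN then w else 0) 0 1) := by
  rw [Matrix.fromBlocks_multiply, Matrix.fromBlocks_multiply]
  ext (i|i) (j|j) <;>
    simp [Matrix.mul_apply, Finset.sum_ite_eq, Finset.sum_ite_eq', ite_mul, mul_ite, hd] <;>
    ring

lemma charpoly_one_unit : (1 : Matrix Unit Unit ℝ).charpoly = X - C 1 := by
  simp [Matrix.charpoly, Matrix.det_unique]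

theorem stmt15 {N : ℕ} (S1 S2 : Matrix (Fin N) (Fin N) ℝ)
    (h1 : S1.PosDef) (h2 : S2.PosDef)
    (iN : Fin N) (hiN : (iN : ℕ) = N - 1)
    (h1d : S1 iN iN = 1) (h2d : S2 iN iN = 1)
    (w : ℝ) (hw : |w| < 1) :
    let S1' : Matrix (Fin N ⊕ Unit) (Fin N ⊕ Unit) ℝ :=
      Matrix.fromBlocks S1 (Matrix.of fun i _ => w * S1 i iN)
        (Matrix.of fun _ j => w * S1 iN j) 1
    let S2' : Matrix (Fin N ⊕ Unit) (Fin N ⊕ Unit) ℝ :=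
      Matrix.fromBlocks S2 (Matrix.of fun i _ => w * S2 i iN)
        (Matrix.of fun _ j => w * S2 iN j) 1
    (S1' * S2'⁻¹).charpoly = (X - C 1) * (S1 * S2⁻¹).charpoly := by
  intro S1' S2'
  have hw2 : (1 : ℝ) - w ^ 2 ≠ 0 := by nlinarith [abs_nonneg w, sq_abs w, abs_lt.mp hw]
  set L : Matrix (Fin N ⊕ Unit) (Fin N ⊕ Unit) ℝ :=
    Matrix.fromBlocks 1 0 (Matrix.of fun (_ : Unit) j => if j = iN then w else 0) 1 with hL
  set M : Matrix (Fin N ⊕ Unit) (Fin N ⊕ Unit) ℝ :=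
    Matrix.fromBlocks 1 (Matrix.of fun i (_ : Unit) => if i = iN then w else 0) 0 1 with hM
  set D1 : Matrix (Fin N ⊕ Unit) (Fin N ⊕ Unit) ℝ :=
    Matrix.fromBlocks S1 0 0 (Matrix.of fun (_ : Unit) (_ : Unit) => (1 - w^2)) with hD1
  set D2 : Matrix (Fin N ⊕ Unit) (Fin N ⊕ Unit) ℝ :=
    Matrix.fromBlocks S2 0 0 (Matrix.of fun (_ : Unit) (_ : Unit) => (1 - w^2)) with hD2
  have hLdet : IsUnit L.det := by
    rw [hL, Matrix.det_fromBlocks_zero₁₂]; simp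
  have hMdet : IsUnit M.det := by
    rw [hM, Matrix.det_fromBlocks_zero₂₁]; simp
  have hS2det : IsUnit S2.det := isUnit_iff_ne_zero.mpr h2.det_pos.ne'
  have hD2det : IsUnit D2.det := by
    rw [hD2, Matrix.det_fromBlocks_zero₁₂]
    simp only [Matrix.det_unique, Matrix.of_apply]
    exact hS2det.mul (isUnit_iff_ne_zero.mpr hw2)
  have hfac1 : S1' = L * D1 * M := leaf_factor S1 iN h1d w
  have hfac2 : S2' = L * D2 * M := leaf_factor S2 iN h2d w
  have hD2inv : D2⁻¹ = Matrix.fromBlocks S2⁻¹ 0 0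
      (Matrix.of fun (_ : Unit) (_ : Unit) => (1 - w^2)⁻¹) := by
    apply Matrix.inv_eq_right_inv
    rw [hD2, Matrix.fromBlocks_multiply]
    ext (i|i) (j|j) <;>
      simp [Matrix.mul_nonsing_inv S2 hS2det, Matrix.mul_apply, mul_inv_cancel₀ hw2,
        Matrix.one_apply]
  have hDD : D1 * D2⁻¹ = Matrix.fromBlocks (S1 * S2⁻¹) 0 0 1 := by
    rw [hD2inv, hD1, Matrix.fromBlocks_multiply]
    ext (i|i) (j|j) <;>
      simp [Matrix.mul_apply, mul_inv_cancel₀ hw2, Matrix.one_apply]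
  have key : S1' * S2'⁻¹ = L * (D1 * D2⁻¹) * L⁻¹ := by
    rw [hfac1, hfac2, Matrix.mul_inv_rev, Matrix.mul_inv_rev]
    have hMM : M * M⁻¹ = 1 := Matrix.mul_nonsing_inv M hMdet
    simp only [Matrix.mul_assoc]
    rw [← Matrix.mul_assoc M M⁻¹, hMM, Matrix.one_mul]
  rw [key, charpoly_conj_aux L _ hLdet, hDD, Matrix.charpoly_fromBlocks_zero₁₂,
    charpoly_one_unit, mul_comm]
end

section
/- (Cauchy-type interlacing for generalized eigenvalues under a one-dimensional reduction.) Let $\Sigma_1', \Sigma_2'$ be symmetric positive definite $N\times N$ matrices, and let $\Sigma_1, \Sigma_2$ be their principal $(N-1)\times(N-1)$ submatrices. Let $\lambda_1^{(1)} \le \cdots \le \lambda_N^{(1)}$ be the eigenvalues of $\Sigma_1'\Sigma_2'^{-1}$ and $\lambda_1^{(2)} \le \cdots \le \lambda_{N-1}^{(2)}$ the eigenvalues of $\Sigma_1\Sigma_2^{-1}$. Then $\lambda_k^{(1)} \le \lambda_k^{(2)} \le \lambda_{k+1}^{(1)}$ for all $1 \le k \le N-1$. -/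
/-!
Write `B = Q²` with `Q = √B` symmetric and diagonalize `Q⁻¹ A Q⁻¹` orthogonally; this produces a
basis `v₁, …, v_N` with `vᵢᵀ B vⱼ = δᵢⱼ` and `vᵢᵀ A vⱼ = λᵢ δᵢⱼ`, where `λᵢ` are the roots of the
characteristic polynomial of `A B⁻¹`, and similarly for the principal submatrices (padded by a
zero last coordinate). On the span of the `vᵢ` with `λᵢ ≥ L` the Rayleigh quotient `xᵀAx / xᵀBx` is
at least `L`; on the span of the `wⱼ` with `μⱼ ≤ U` it is at most `U`. When the two spans have
total dimension exceeding the ambient one they meet in a nonzero vector, so `L ≤ U`; choosing the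
index ranges by sortedness gives both halves of the interlacing.
-/

open Matrix Polynomial

theorem Monotone.eq_of_prod_X_sub_C_eq {m : ℕ} {a b : Fin m → ℝ} (ha : Monotone a)
    (hb : Monotone b) (h : ∏ i, (X - C (a i)) = ∏ i, (X - C (b i))) : a = b := by
  have hroots : (List.ofFn a : Multiset ℝ) = List.ofFn b := by
    simpa [roots_prod, Finset.prod_ne_zero_iff, X_sub_C_ne_zero, Fin.univ_val_map] using
      congrArg roots h
  exact List.ofFn_injective <|
    (Multiset.coe_eq_coe.mp hroots).eq_of_sortedLE ha.sortedLE_ofFn hb.sortedLE_ofFn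

namespace Matrix

variable {n m ι κ : Type*} [Fintype n] [Fintype ι] [DecidableEq ι] [Fintype κ] [DecidableEq κ]

structure IsPencilDiagonalizer (A B : Matrix n n ℝ) (V : Matrix n ι ℝ) (μ : ι → ℝ) : Prop where
  transpose_mul_mul_left : Vᵀ * A * V = diagonal μ
  transpose_mul_mul_right : Vᵀ * B * V = 1

omit [DecidableEq ι] in
lemma mulVec_dotProduct_mulVec_mulVec (A : Matrix n n ℝ) (V : Matrix n ι ℝ) (c : ι → ℝ) :
    V *ᵥ c ⬝ᵥ A *ᵥ (V *ᵥ c) = c ⬝ᵥ (Vᵀ * A * V) *ᵥ c := by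
  rw [← mulVec_mulVec, ← mulVec_mulVec, dotProduct_mulVec c, vecMul_transpose]

lemma dotProduct_diagonal_mulVec (μ c : ι → ℝ) :
    c ⬝ᵥ diagonal μ *ᵥ c = ∑ i, μ i * (c i * c i) := by
  simp only [dotProduct, mulVec_diagonal]
  exact Finset.sum_congr rfl fun _ _ => mul_left_comm _ _ _

namespace IsPencilDiagonalizer

variable {A B : Matrix n n ℝ} {V : Matrix n ι ℝ} {μ : ι → ℝ}

omit [Fintype ι] [Fintype κ] in
lemma submatrix (h : IsPencilDiagonalizer A B V μ) {f : κ → ι} (hf : Function.Injective f) :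
    IsPencilDiagonalizer A B (V.submatrix id f) (μ ∘ f) := by
  have hgram (M : Matrix n n ℝ) :
      (V.submatrix id f)ᵀ * M * V.submatrix id f = (Vᵀ * M * V).submatrix f f := by
    ext i j
    simp [Matrix.mul_apply]
  exact ⟨by rw [hgram, h.transpose_mul_mul_left, submatrix_diagonal _ _ hf],
    by rw [hgram, h.transpose_mul_mul_right, submatrix_one _ hf]⟩

omit [Fintype ι] in
lemma of_submatrix [Fintype m] [DecidableEq n] {f : m → n} {W : Matrix m ι ℝ}
    (h : IsPencilDiagonalizer (A.submatrix f f) (B.submatrix f f) W μ) :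
    IsPencilDiagonalizer A B ((1 : Matrix n n ℝ).submatrix id f * W) μ := by
  have hgram (M : Matrix n n ℝ) :
      ((1 : Matrix n n ℝ).submatrix id f * W)ᵀ * M * ((1 : Matrix n n ℝ).submatrix id f * W) =
        Wᵀ * M.submatrix f f * W := by
    have hP : ((1 : Matrix n n ℝ).submatrix id f)ᵀ * M * (1 : Matrix n n ℝ).submatrix id f =
        M.submatrix f f := by
      ext i j
      simp [Matrix.mul_apply, Matrix.one_apply]
    rw [transpose_mul, ← hP]
    simp only [Matrix.mul_assoc]
  exact ⟨by rw [hgram, h.transpose_mul_mul_left], by rw [hgram, h.transpose_mul_mul_right]⟩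

lemma mulVec_injective (h : IsPencilDiagonalizer A B V μ) : Function.Injective V.mulVec := by
  intro c d hcd
  simpa [mulVec_mulVec, h.transpose_mul_mul_right] using congrArg ((Vᵀ * B) *ᵥ ·) hcd

lemma mul_dotProduct_le (h : IsPencilDiagonalizer A B V μ) {L : ℝ} (hL : ∀ i, L ≤ μ i)
    (c : ι → ℝ) : L * (V *ᵥ c ⬝ᵥ B *ᵥ (V *ᵥ c)) ≤ V *ᵥ c ⬝ᵥ A *ᵥ (V *ᵥ c) := by
  rw [mulVec_dotProduct_mulVec_mulVec, mulVec_dotProduct_mulVec_mulVec, h.transpose_mul_mul_left,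
    h.transpose_mul_mul_right, one_mulVec, dotProduct_diagonal_mulVec, dotProduct, Finset.mul_sum]
  exact Finset.sum_le_sum fun i _ => mul_le_mul_of_nonneg_right (hL i) (mul_self_nonneg _)

lemma dotProduct_le_mul (h : IsPencilDiagonalizer A B V μ) {U : ℝ} (hU : ∀ i, μ i ≤ U)
    (c : ι → ℝ) : V *ᵥ c ⬝ᵥ A *ᵥ (V *ᵥ c) ≤ U * (V *ᵥ c ⬝ᵥ B *ᵥ (V *ᵥ c)) := by
  rw [mulVec_dotProduct_mulVec_mulVec, mulVec_dotProduct_mulVec_mulVec, h.transpose_mul_mul_left,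
    h.transpose_mul_mul_right, one_mulVec, dotProduct_diagonal_mulVec, dotProduct, Finset.mul_sum]
  exact Finset.sum_le_sum fun i _ => mul_le_mul_of_nonneg_right (hU i) (mul_self_nonneg _)

theorem le_of_card_lt_card_add_card (hB : B.PosDef) (hV : IsPencilDiagonalizer A B V μ)
    {W : Matrix n κ ℝ} {ν : κ → ℝ} (hW : IsPencilDiagonalizer A B W ν)
    (hcard : Fintype.card n < Fintype.card ι + Fintype.card κ) {L U : ℝ} (hL : ∀ i, L ≤ μ i)
    (hU : ∀ j, ν j ≤ U) : L ≤ U := by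
  let f : (ι → ℝ) × (κ → ℝ) →ₗ[ℝ] n → ℝ :=
    V.mulVecLin ∘ₗ LinearMap.fst ℝ _ _ - W.mulVecLin ∘ₗ LinearMap.snd ℝ _ _
  obtain ⟨⟨c, d⟩, hcd, hne⟩ := Submodule.exists_mem_ne_zero_of_ne_bot <|
    LinearMap.ker_ne_bot_of_finrank_lt (f := f) (by simpa using hcard)
  have hVW : V *ᵥ c = W *ᵥ d := by simpa [f, sub_eq_zero] using hcd
  have hx : V *ᵥ c ≠ 0 := by
    intro h0
    have hc : c = 0 := hV.mulVec_injective (by rw [h0, mulVec_zero])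
    have hd : d = 0 := hW.mulVec_injective (by rw [← hVW, h0, mulVec_zero])
    exact hne (by rw [hc, hd]; rfl)
  have hpos : 0 < V *ᵥ c ⬝ᵥ B *ᵥ (V *ᵥ c) := hB.dotProduct_mulVec_pos hx
  refine le_of_mul_le_mul_right ((hV.mul_dotProduct_le hL c).trans ?_) hpos
  rw [hVW]
  exact hW.dotProduct_le_mul hU d

omit [Fintype ι] [Fintype κ] in
theorem le_of_card_lt_finset_card_add_card (hB : B.PosDef) (hV : IsPencilDiagonalizer A B V μ)
    {W : Matrix n κ ℝ} {ν : κ → ℝ} (hW : IsPencilDiagonalizer A B W ν) (s : Finset ι)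
    (t : Finset κ) (hcard : Fintype.card n < s.card + t.card) {L U : ℝ}
    (hL : ∀ i ∈ s, L ≤ μ i) (hU : ∀ j ∈ t, ν j ≤ U) : L ≤ U :=
  (hV.submatrix (f := ((↑) : s → ι)) Subtype.val_injective).le_of_card_lt_card_add_card
    hB (hW.submatrix (f := ((↑) : t → κ)) Subtype.val_injective) (by simpa using hcard)
    (fun i => hL i i.2) (fun j => hU j j.2)

end IsPencilDiagonalizer

open scoped MatrixOrder in
theorem exists_isPencilDiagonalizer [DecidableEq n] {A B : Matrix n n ℝ} (hA : A.IsHermitian)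
    (hB : B.PosDef) : ∃ (V : Matrix n n ℝ) (μ : n → ℝ),
      IsPencilDiagonalizer A B V μ ∧ (A * B⁻¹).charpoly = ∏ i, (X - C (μ i)) := by
  set Q := CFC.sqrt B
  have hQQ : Q * Q = B := CFC.sqrt_mul_sqrt_self B hB.posSemidef.nonneg
  have hQ : Qᵀ = Q := (CFC.sqrt_nonneg B).posSemidef.isHermitian.eq
  have : Invertible Q := (isUnit_of_mul_isUnit_left (hQQ ▸ hB.isUnit)).invertible
  have hQinv : Q⁻¹ᵀ = Q⁻¹ := by rw [transpose_nonsing_inv, hQ]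
  set M := Q⁻¹ * A * Q⁻¹
  have hM : M.IsHermitian := by
    simpa [M, hQinv] using isHermitian_conjTranspose_mul_mul Q⁻¹ hA
  set U := (hM.eigenvectorUnitary : Matrix n n ℝ)
  have hUstar : star U = Uᵀ := by rw [star_eq_conjTranspose, conjTranspose_eq_transpose_of_trivial]
  have hUU : Uᵀ * U = 1 := hUstar ▸ Unitary.coe_star_mul_self _
  have hUMU : Uᵀ * M * U = diagonal hM.eigenvalues := by
    rw [← hUstar]
    simpa using hM.conjStarAlgAut_star_eigenvectorUnitary
  refine ⟨Q⁻¹ * U, hM.eigenvalues, ⟨?_, ?_⟩, ?_⟩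
  · rw [transpose_mul, hQinv, ← hUMU]
    simp only [M, Matrix.mul_assoc]
  · rw [transpose_mul, hQinv, ← hQQ, ← hUU]
    simp only [Matrix.mul_assoc, inv_mul_cancel_left_of_invertible,
      mul_inv_cancel_left_of_invertible]
  · rw [← hQQ, Matrix.mul_inv_rev, ← Matrix.mul_assoc, charpoly_mul_comm, ← Matrix.mul_assoc,
      hM.charpoly_eq]
    simp

theorem exists_isPencilDiagonalizer_of_charpoly_eq {N : ℕ} {A B : Matrix (Fin N) (Fin N) ℝ}
    (hA : A.IsHermitian) (hB : B.PosDef) {μ : Fin N → ℝ} (hμ : Monotone μ)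
    (hchar : (A * B⁻¹).charpoly = ∏ i, (X - C (μ i))) : ∃ V, IsPencilDiagonalizer A B V μ := by
  obtain ⟨V, e, hV, he⟩ := exists_isPencilDiagonalizer hA hB
  have hsort : e ∘ Tuple.sort e = μ := (Tuple.monotone_sort e).eq_of_prod_X_sub_C_eq hμ <| by
    rw [← hchar, he]
    exact Equiv.prod_comp (Tuple.sort e) fun i => X - C (e i)
  exact ⟨_, hsort ▸ hV.submatrix (Tuple.sort e).injective⟩

end Matrix

theorem stmt18 {N : ℕ} (S1' S2' : Matrix (Fin (N + 1)) (Fin (N + 1)) ℝ)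
    (h1 : S1'.PosDef) (h2 : S2'.PosDef)
    (lam1 : Fin (N + 1) → ℝ) (hmono1 : Monotone lam1)
    (hchar1 : (S1' * S2'⁻¹).charpoly = ∏ i, (X - C (lam1 i)))
    (lam2 : Fin N → ℝ) (hmono2 : Monotone lam2)
    (hchar2 :
      ((S1'.submatrix Fin.castSucc Fin.castSucc) *
        (S2'.submatrix Fin.castSucc Fin.castSucc)⁻¹).charpoly = ∏ i, (X - C (lam2 i))) :
    ∀ k : Fin N, lam1 k.castSucc ≤ lam2 k ∧ lam2 k ≤ lam1 k.succ := by
  intro k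
  obtain ⟨V, hV⟩ := exists_isPencilDiagonalizer_of_charpoly_eq h1.isHermitian h2 hmono1 hchar1
  obtain ⟨W, hW⟩ := exists_isPencilDiagonalizer_of_charpoly_eq (h1.isHermitian.submatrix _)
    (h2.submatrix (Fin.castSucc_injective N)) hmono2 hchar2
  replace hW := hW.of_submatrix
  constructor
  · exact hV.le_of_card_lt_finset_card_add_card h2 hW (Finset.Ici k.castSucc) (Finset.Iic k)
      (by simp only [Fintype.card_fin, Fin.card_Ici, Fin.card_Iic, Fin.val_castSucc]; omega)
      (fun i hi => hmono1 (Finset.mem_Ici.mp hi))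
      (fun j hj => hmono2 (Finset.mem_Iic.mp hj))
  · exact hW.le_of_card_lt_finset_card_add_card h2 hV (Finset.Ici k) (Finset.Iic k.succ)
      (by simp only [Fintype.card_fin, Fin.card_Ici, Fin.card_Iic, Fin.val_succ]; omega)
      (fun j hj => hmono2 (Finset.mem_Ici.mp hj))
      (fun i hi => hmono1 (Finset.mem_Iic.mp hi))
end
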